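/- arXiv:2203.16571 — 5 statements merged into one kernel-verified Lean document; each statement's English description precedes it below -/
import Mathlib

section
/- If ν is a probability measure on U(D) that is symmetric (invariant under U ↦ U†), then its moment operator M(ν,t) is Hermitian, and consequently ‖M(ν^{*k}, t) − M(μ_H, t)‖_∞ = ‖M(ν, t) − M(μ_H, t)‖_∞^k exactly, for all k ≥ 1. -/
/-
`U ↦ U^{⊗t} ⊗ conj(U)^{⊗t}` is multiplicative, so the moment matrix turns convolution of
measures into matrix multiplication, and since `U⁻¹ = Uᴴ` an inversion-invariant measure has a
Hermitian moment matrix. A left-invariant probability measure `μH` absorbs convolution and is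
inversion-invariant, so `P = M(μH)` is a Hermitian idempotent with `A P = P A = P` for
`A = M(ν)`. Hence `(A - P)^k = A^k - P = M(ν^{*k}) - P`, and for the self-adjoint `A - P` the
C*-identity `‖a^(2^n)‖ = ‖a‖^(2^n)` upgrades to `‖(A - P)^k‖ = ‖A - P‖^k`.
-/
open MeasureTheory
noncomputable section

instance {D : ℕ} : MeasurableSpace (Matrix (Fin D) (Fin D) ℂ) := borel _

abbrev UG (D : ℕ) := Matrix.unitaryGroup (Fin D) ℂ

def tpow {D : ℕ} (U : Matrix (Fin D) (Fin D) ℂ) (t : ℕ) :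
    Matrix (Fin t → Fin D) (Fin t → Fin D) ℂ :=
  fun i j => ∏ k, U (i k) (j k)

def momentMatrix {D : ℕ} (ν : Measure (UG D)) (t : ℕ) :
    Matrix ((Fin t → Fin D) × (Fin t → Fin D)) ((Fin t → Fin D) × (Fin t → Fin D)) ℂ :=
  fun p q => ∫ U, tpow (U : Matrix (Fin D) (Fin D) ℂ) t p.1 q.1
      * (starRingEnd ℂ) (tpow (U : Matrix (Fin D) (Fin D) ℂ) t p.2 q.2) ∂ν

def opNorm {n : Type*} [Fintype n] [DecidableEq n] (M : Matrix n n ℂ) : ℝ :=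
  ‖Matrix.toEuclideanCLM (𝕜 := ℂ) (n := n) M‖

def mconv {D : ℕ} (μ ν : Measure (UG D)) : Measure (UG D) :=
  Measure.map (fun p : UG D × UG D => p.1 * p.2) (μ.prod ν)

def convIter {D : ℕ} (ν : Measure (UG D)) : ℕ → Measure (UG D)
  | 0 => ν
  | n+1 => mconv ν (convIter ν n)

section InvariantMeasure

variable {G : Type*} [Group G] [MeasurableSpace G] [MeasurableMul₂ G]

theorem mconv_eq_right_of_isMulLeftInvariant (ρ μ : Measure G) [IsProbabilityMeasure ρ]
    [SFinite μ] [μ.IsMulLeftInvariant] : ρ ∗ₘ μ = μ := by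
  ext s hs
  rw [Measure.mconv, Measure.map_apply measurable_mul hs,
    Measure.prod_apply (measurable_mul hs)]
  simp only [Set.preimage_preimage, measure_preimage_mul μ, lintegral_const, measure_univ,
    mul_one]

/-- `(x, y) ↦ (y x, x⁻¹)` preserves `μ × μ`, and it pulls `univ ×ˢ s` back to `s⁻¹ ×ˢ univ`. -/
theorem isInvInvariant_of_isMulLeftInvariant [MeasurableInv G] (μ : Measure G)
    [IsProbabilityMeasure μ] [μ.IsMulLeftInvariant] : μ.IsInvInvariant := by
  refine ⟨Measure.ext fun s hs => ?_⟩
  have hpre : (fun z : G × G => (z.2 * z.1, z.1⁻¹)) ⁻¹' (Set.univ ×ˢ s) = s⁻¹ ×ˢ Set.univ := by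
    ext; simp
  have h := (measurePreserving_mul_prod_inv μ μ).measure_preimage
    (MeasurableSet.univ.prod hs).nullMeasurableSet
  rwa [hpre, Measure.prod_prod, Measure.prod_prod, measure_univ, mul_one, one_mul,
    ← Measure.inv_apply] at h

end InvariantMeasure

theorem IsSelfAdjoint.norm_pow {E : Type*} [NormedRing E] [StarRing E] [CStarRing E] {a : E}
    (ha : IsSelfAdjoint a) {k : ℕ} (hk : k ≠ 0) : ‖a ^ k‖ = ‖a‖ ^ k := by
  refine le_antisymm (norm_pow_le' a (Nat.pos_of_ne_zero hk)) ?_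
  obtain ha0 | hapos := (norm_nonneg a).eq_or_lt
  · rw [← ha0, zero_pow hk]
    exact norm_nonneg _
  have hk2 : k < 2 ^ k := Nat.lt_two_pow_self
  have key : ‖a‖ ^ k * ‖a‖ ^ (2 ^ k - k) ≤ ‖a ^ k‖ * ‖a‖ ^ (2 ^ k - k) :=
    calc ‖a‖ ^ k * ‖a‖ ^ (2 ^ k - k) = ‖a ^ 2 ^ k‖ := by
          rw [← pow_add, Nat.add_sub_cancel' hk2.le, ha.norm_pow_two_pow]
      _ = ‖a ^ k * a ^ (2 ^ k - k)‖ := by rw [← pow_add, Nat.add_sub_cancel' hk2.le]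
      _ ≤ ‖a ^ k‖ * ‖a ^ (2 ^ k - k)‖ := norm_mul_le _ _
      _ ≤ ‖a ^ k‖ * ‖a‖ ^ (2 ^ k - k) := by
          gcongr
          exact norm_pow_le' a (Nat.sub_pos_of_lt hk2)
  exact le_of_mul_le_mul_right key (by positivity)

theorem opNorm_pow_of_isHermitian {n : Type*} [Fintype n] [DecidableEq n] {A : Matrix n n ℂ}
    (hA : A.IsHermitian) {k : ℕ} (hk : k ≠ 0) : opNorm (A ^ k) = opNorm A ^ k := by
  rw [opNorm, opNorm, map_pow]
  exact (hA.isSelfAdjoint.map Matrix.toEuclideanCLM).norm_pow hk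

theorem sub_pow_of_mul_eq_of_mul_eq {R : Type*} [Ring R] {a p : R} (hap : a * p = p)
    (hpa : p * a = p) (hp : IsIdempotentElem p) {k : ℕ} (hk : k ≠ 0) :
    (a - p) ^ k = a ^ k - p := by
  have hapow : ∀ n : ℕ, a ^ n * p = p := fun n => by
    induction n with
    | zero => rw [pow_zero, one_mul]
    | succ n ih => rw [pow_succ, mul_assoc, hap, ih]
  induction k with
  | zero => exact absurd rfl hk
  | succ k ih =>
    rcases eq_or_ne k 0 with rfl | hk0
    · simp
    rw [pow_succ, ih hk0, pow_succ, sub_mul, mul_sub, mul_sub, hapow, hpa, hp.eq]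
    abel

section Borel

variable {D : ℕ}

instance : BorelSpace (Matrix (Fin D) (Fin D) ℂ) := ⟨rfl⟩

instance : SecondCountableTopology (Matrix (Fin D) (Fin D) ℂ) :=
  inferInstanceAs (SecondCountableTopology (Fin D → Fin D → ℂ))

instance : SecondCountableTopology (UG D) :=
  TopologicalSpace.Subtype.secondCountableTopology _

instance : BorelSpace (UG D) := Subtype.borelSpace _

end Borel

section Moment

open Matrix

variable {D : ℕ}

theorem tpow_mul (U V : Matrix (Fin D) (Fin D) ℂ) (t : ℕ) :
    tpow (U * V) t = tpow U t * tpow V t := by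
  ext i j
  simp only [tpow, mul_apply, Finset.prod_univ_sum, Fintype.piFinset_univ,
    Finset.prod_mul_distrib]

theorem tpow_conjTranspose (U : Matrix (Fin D) (Fin D) ℂ) (t : ℕ) :
    tpow Uᴴ t = (tpow U t)ᴴ := by
  ext i j
  simp only [tpow, conjTranspose_apply, star_prod]

theorem continuous_tpow_apply (t : ℕ) (i j : Fin t → Fin D) :
    Continuous fun U : Matrix (Fin D) (Fin D) ℂ => tpow U t i j := by
  unfold tpow
  fun_prop

theorem norm_tpow_apply_le {U : Matrix (Fin D) (Fin D) ℂ} (hU : U ∈ unitaryGroup (Fin D) ℂ)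
    (t : ℕ) (i j : Fin t → Fin D) : ‖tpow U t i j‖ ≤ 1 := by
  rw [tpow, norm_prod]
  exact Finset.prod_le_one (fun _ _ => norm_nonneg _) fun k _ =>
    entry_norm_bound_of_unitary hU _ _

/-- `U^{⊗t} ⊗ conj(U)^{⊗t}`. -/
def momentTensor (t : ℕ) (U : Matrix (Fin D) (Fin D) ℂ) :
    Matrix ((Fin t → Fin D) × (Fin t → Fin D)) ((Fin t → Fin D) × (Fin t → Fin D)) ℂ :=
  kroneckerMap (· * ·) (tpow U t) ((tpow U t).map (starRingEnd ℂ))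

theorem momentMatrix_apply (ν : Measure (UG D)) (t : ℕ) (p q) :
    momentMatrix ν t p q = ∫ U : UG D, momentTensor t (U : Matrix (Fin D) (Fin D) ℂ) p q ∂ν := rfl

theorem momentTensor_mul (t : ℕ) (U V : Matrix (Fin D) (Fin D) ℂ) :
    momentTensor t (U * V) = momentTensor t U * momentTensor t V := by
  rw [momentTensor, momentTensor, momentTensor, tpow_mul, Matrix.map_mul, mul_kronecker_mul]

theorem momentTensor_conjTranspose (t : ℕ) (U : Matrix (Fin D) (Fin D) ℂ) :
    momentTensor t Uᴴ = (momentTensor t U)ᴴ := by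
  rw [momentTensor, momentTensor, conjTranspose_kronecker, tpow_conjTranspose,
    conjTranspose_map (starRingEnd ℂ) fun _ => rfl]

theorem continuous_momentTensor_apply (t : ℕ) (p q) :
    Continuous fun U : Matrix (Fin D) (Fin D) ℂ => momentTensor t U p q := by
  simp only [momentTensor, kroneckerMap_apply, map_apply]
  exact (continuous_tpow_apply t _ _).mul
    (Complex.continuous_conj.comp (continuous_tpow_apply t _ _))

theorem aestronglyMeasurable_momentTensor_apply (ν : Measure (UG D)) (t : ℕ) (p q) :
    AEStronglyMeasurable (fun U : UG D => momentTensor t (U : Matrix (Fin D) (Fin D) ℂ) p q) ν :=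
  ((continuous_momentTensor_apply t p q).comp continuous_subtype_val).aestronglyMeasurable

theorem integrable_momentTensor_apply (ν : Measure (UG D)) [IsFiniteMeasure ν] (t : ℕ) (p q) :
    Integrable (fun U : UG D => momentTensor t (U : Matrix (Fin D) (Fin D) ℂ) p q) ν := by
  refine .of_bound (aestronglyMeasurable_momentTensor_apply ν t p q) 1 (ae_of_all _ fun U => ?_)
  simp only [momentTensor, kroneckerMap_apply, map_apply, norm_mul, RCLike.norm_conj]
  exact mul_le_one₀ (norm_tpow_apply_le U.2 t _ _) (norm_nonneg _) (norm_tpow_apply_le U.2 t _ _)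

theorem momentMatrix_mconv (μ ν : Measure (UG D)) [IsFiniteMeasure μ] [IsFiniteMeasure ν]
    (t : ℕ) : momentMatrix (mconv μ ν) t = momentMatrix μ t * momentMatrix ν t := by
  ext p q
  have hint : ∀ r, Integrable (fun z : UG D × UG D =>
      momentTensor t (z.1 : Matrix (Fin D) (Fin D) ℂ) p r *
        momentTensor t (z.2 : Matrix (Fin D) (Fin D) ℂ) r q) (μ.prod ν) := fun r =>
    (integrable_momentTensor_apply μ t p r).mul_prod (integrable_momentTensor_apply ν t r q)
  calc momentMatrix (mconv μ ν) t p q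
      = ∫ z : UG D × UG D, momentTensor t ((z.1 * z.2 : UG D) : Matrix (Fin D) (Fin D) ℂ) p q
          ∂μ.prod ν :=
        integral_map measurable_mul.aemeasurable (aestronglyMeasurable_momentTensor_apply _ t p q)
    _ = ∑ r, ∫ z : UG D × UG D, momentTensor t (z.1 : Matrix (Fin D) (Fin D) ℂ) p r *
          momentTensor t (z.2 : Matrix (Fin D) (Fin D) ℂ) r q ∂μ.prod ν := by
        simp_rw [Submonoid.coe_mul, momentTensor_mul, Matrix.mul_apply]
        exact integral_finsetSum _ fun r _ => hint r
    _ = (momentMatrix μ t * momentMatrix ν t) p q := by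
        simp only [Matrix.mul_apply, momentMatrix_apply]
        exact Finset.sum_congr rfl fun r _ => integral_prod_mul
          (fun U : UG D => momentTensor t (U : Matrix (Fin D) (Fin D) ℂ) p r)
          (fun U : UG D => momentTensor t (U : Matrix (Fin D) (Fin D) ℂ) r q)

instance (ν : Measure (UG D)) [IsProbabilityMeasure ν] (n : ℕ) :
    IsProbabilityMeasure (convIter ν n) := by
  induction n with
  | zero => assumption
  | succ n ih => exact Measure.isProbabilityMeasure_map measurable_mul.aemeasurable

theorem momentMatrix_convIter (ν : Measure (UG D)) [IsProbabilityMeasure ν] (t n : ℕ) :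
    momentMatrix (convIter ν n) t = momentMatrix ν t ^ (n + 1) := by
  induction n with
  | zero => rw [zero_add, pow_one]; rfl
  | succ n ih => rw [convIter, momentMatrix_mconv, ih, pow_succ' _ (n + 1)]

theorem momentMatrix_mul_of_isMulLeftInvariant (ρ μ : Measure (UG D)) [IsProbabilityMeasure ρ]
    [IsProbabilityMeasure μ] [μ.IsMulLeftInvariant] (t : ℕ) :
    momentMatrix ρ t * momentMatrix μ t = momentMatrix μ t := by
  rw [← momentMatrix_mconv, mconv, ← Measure.mconv, mconv_eq_right_of_isMulLeftInvariant]

theorem momentMatrix_isHermitian_of_map_inv (ν : Measure (UG D))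
    (hν : Measure.map (fun U : UG D => U⁻¹) ν = ν) (t : ℕ) : (momentMatrix ν t).IsHermitian := by
  ext p q
  rw [Matrix.conjTranspose_apply, momentMatrix_apply, momentMatrix_apply, RCLike.star_def,
    ← integral_conj]
  conv_rhs => rw [← hν, integral_map measurable_inv.aemeasurable
    (aestronglyMeasurable_momentTensor_apply _ t p q)]
  simp only [Matrix.UnitaryGroup.inv_apply, Matrix.star_eq_conjTranspose,
    momentTensor_conjTranspose, Matrix.conjTranspose_apply, RCLike.star_def]

end Moment

theorem stmt1 {D : ℕ} (t : ℕ) (ν μH : Measure (UG D))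
    [IsProbabilityMeasure ν] [IsProbabilityMeasure μH]
    (hinv : ∀ g : UG D, Measure.map (fun x => g * x) μH = μH)
    (hsym : Measure.map (fun U : UG D => U⁻¹) ν = ν) :
    (momentMatrix ν t).IsHermitian ∧
    ∀ k : ℕ, 1 ≤ k →
      opNorm (momentMatrix (convIter ν (k-1)) t - momentMatrix μH t) =
        (opNorm (momentMatrix ν t - momentMatrix μH t)) ^ k := by
  have : μH.IsMulLeftInvariant := ⟨hinv⟩
  have : μH.IsInvInvariant := isInvInvariant_of_isMulLeftInvariant μH
  set A := momentMatrix ν t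
  set P := momentMatrix μH t
  have hA : A.IsHermitian := momentMatrix_isHermitian_of_map_inv ν hsym t
  have hP : P.IsHermitian := momentMatrix_isHermitian_of_map_inv μH (Measure.map_inv_eq_self μH) t
  have hAP : A * P = P := momentMatrix_mul_of_isMulLeftInvariant ν μH t
  have hPA : P * A = P := by
    simpa only [Matrix.conjTranspose_mul, hA.eq, hP.eq] using congr_arg Matrix.conjTranspose hAP
  have hPP : IsIdempotentElem P := momentMatrix_mul_of_isMulLeftInvariant μH μH t
  refine ⟨hA, fun k hk => ?_⟩
  rw [momentMatrix_convIter, Nat.sub_add_cancel hk, ← sub_pow_of_mul_eq_of_mul_eq hAP hPA hPP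
    (by omega), opNorm_pow_of_isHermitian (hA.sub hP) (by omega)]
end
end

section
/- Let T_ν be the averaging operator on L²(G) of a finite group G, (T_ν f)(g) = Σ_h ν(h) f(h^{−1}g), where ν is a symmetric probability measure supported on a generating set S with every element of G expressible as a product of at most d elements of S, and each generator having probability at least η. Then the second-largest eigenvalue of T_ν satisfies λ₂(T_ν) ≤ 1 − η/d². -/
/-!
Write `λₓ` for the left regular representation and `𝓔(v) = ∑ₛ ν(s) ‖v - λₛ v‖²`; for an eigenvector
`T_ν v = λ v` one has `𝓔(v) = 2 (1 - λ) ‖v‖²`. Since `x ↦ ‖v - λₓ v‖` is subadditive, a word of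
length `≤ d` in `S` gives `‖v - λₓ v‖² ≤ d² maxₛ ‖v - λₛ v‖² ≤ (d² / η) 𝓔(v)` for every `x`.
Averaging over `x` (the Dirichlet form of the uniform measure) gives `2 ‖v‖²` on the left when
`v ⊥ 1`, hence `2 η ‖v‖² ≤ d² 𝓔(v) = 2 d² (1 - λ) ‖v‖²`.
-/

noncomputable section

open Finset Matrix

namespace ConvolutionGap

variable {G : Type*} [Group G] [Fintype G]

/-- `shiftEnergy v x = ‖v - λₓ v‖²`, where `(λₓ v) g = v (x⁻¹ g)`. -/
def shiftEnergy (v : G → ℝ) (x : G) : ℝ := ∑ g, (v g - v (x⁻¹ * g)) ^ 2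

def convolutionMatrix (ν : G → ℝ) : Matrix G G ℝ := Matrix.of fun g g' => ν (g * g'⁻¹)

lemma sum_comp_mul_left (f : G → ℝ) (x : G) : ∑ g, f (x * g) = ∑ g, f g :=
  Equiv.sum_comp (Equiv.mulLeft x) f

lemma sqrt_sum_sq_add_le {ι : Type*} [Fintype ι] (a b : ι → ℝ) :
    √(∑ i, (a i + b i) ^ 2) ≤ √(∑ i, a i ^ 2) + √(∑ i, b i ^ 2) := by
  have hnorm : ∀ f : ι → ℝ, ‖WithLp.toLp 2 f‖ = √(∑ i, f i ^ 2) := fun f => by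
    simp only [EuclideanSpace.norm_eq, Real.norm_eq_abs, sq_abs]
  rw [← hnorm, ← hnorm, ← hnorm]
  exact norm_add_le (WithLp.toLp 2 a) (WithLp.toLp 2 b)

lemma shiftEnergy_nonneg (v : G → ℝ) (x : G) : 0 ≤ shiftEnergy v x :=
  sum_nonneg fun _ _ => sq_nonneg _

@[simp]
lemma shiftEnergy_one (v : G → ℝ) : shiftEnergy v 1 = 0 := by
  simp [shiftEnergy]

lemma shiftEnergy_eq (v : G → ℝ) (x : G) :
    shiftEnergy v x = 2 * ∑ g, v g ^ 2 - 2 * ∑ g, v g * v (x⁻¹ * g) := by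
  have htrans : ∑ g, v (x⁻¹ * g) ^ 2 = ∑ g, v g ^ 2 := sum_comp_mul_left (v · ^ 2) x⁻¹
  simp only [shiftEnergy, sub_sq, mul_assoc, sum_add_distrib, sum_sub_distrib, htrans, ← mul_sum]
  ring

/-- `‖v - λₓᵧ v‖ ≤ ‖v - λₓ v‖ + ‖λₓ v - λₓ λᵧ v‖`, and `λₓ` is an isometry. -/
lemma sqrt_shiftEnergy_mul_le (v : G → ℝ) (x y : G) :
    √(shiftEnergy v (x * y)) ≤ √(shiftEnergy v x) + √(shiftEnergy v y) := by
  have htrans : ∑ g, (v (x⁻¹ * g) - v ((x * y)⁻¹ * g)) ^ 2 = shiftEnergy v y := by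
    rw [← sum_comp_mul_left _ x]
    simp [shiftEnergy, mul_assoc]
  calc √(shiftEnergy v (x * y))
      = √(∑ g, ((v g - v (x⁻¹ * g)) + (v (x⁻¹ * g) - v ((x * y)⁻¹ * g))) ^ 2) := by
        congr 1
        exact sum_congr rfl fun g _ => by ring
    _ ≤ _ := sqrt_sum_sq_add_le _ _
    _ = √(shiftEnergy v x) + √(shiftEnergy v y) := by rw [htrans]; rfl

lemma sqrt_shiftEnergy_list_prod_le (v : G → ℝ) {B : ℝ} (l : List G)
    (hl : ∀ x ∈ l, shiftEnergy v x ≤ B) : √(shiftEnergy v l.prod) ≤ l.length * √B := by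
  induction l with
  | nil => simp
  | cons s t ih =>
    simp only [List.forall_mem_cons] at hl
    calc √(shiftEnergy v (s * t.prod))
        ≤ √(shiftEnergy v s) + √(shiftEnergy v t.prod) := sqrt_shiftEnergy_mul_le v s t.prod
      _ ≤ √B + t.length * √B := add_le_add (Real.sqrt_le_sqrt hl.1) (ih hl.2)
      _ = (t.length + 1 : ℕ) * √B := by push_cast; ring

lemma shiftEnergy_list_prod_le (v : G → ℝ) {B : ℝ} (hB : 0 ≤ B) {d : ℕ} (l : List G)
    (hlen : l.length ≤ d) (hl : ∀ x ∈ l, shiftEnergy v x ≤ B) :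
    shiftEnergy v l.prod ≤ d ^ 2 * B := by
  have hsqrt := (sqrt_shiftEnergy_list_prod_le v l hl).trans
    (mul_le_mul_of_nonneg_right (Nat.cast_le.mpr hlen) (Real.sqrt_nonneg B))
  rwa [Real.sqrt_le_left (by positivity), mul_pow, Real.sq_sqrt hB] at hsqrt

/-- The uniform averaging operator has spectral gap `1`. -/
lemma sum_shiftEnergy {v : G → ℝ} (hv : ∑ g, v g = 0) :
    ∑ x, shiftEnergy v x = 2 * Fintype.card G * ∑ g, v g ^ 2 := by
  have hcross : ∀ g : G, ∑ x, v (x⁻¹ * g) = 0 := fun g => by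
    rw [← hv]
    exact Fintype.sum_equiv ((Equiv.inv G).trans (Equiv.mulRight g)) _ _ fun _ => rfl
  simp only [shiftEnergy_eq, sum_sub_distrib, ← mul_sum, sum_const, card_univ, nsmul_eq_mul]
  rw [sum_comm]
  simp only [← mul_sum, hcross, mul_zero, sum_const_zero]
  ring

lemma convolutionMatrix_mulVec (ν v : G → ℝ) (g : G) :
    (convolutionMatrix ν *ᵥ v) g = ∑ s, ν s * v (s⁻¹ * g) := by
  simp only [mulVec, dotProduct]
  exact Fintype.sum_equiv ((Equiv.inv G).trans (Equiv.mulLeft g)) _ _ fun g' => by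
    simp [convolutionMatrix, mul_assoc]

/-- `∑ₛ ν(s) ‖v - λₛ v‖² = 2 ⟨v, (1 - T_ν) v⟩`. -/
lemma sum_mul_shiftEnergy {ν : G → ℝ} (hν : ∑ s, ν s = 1) (v : G → ℝ) :
    ∑ s, ν s * shiftEnergy v s = 2 * (∑ g, v g ^ 2 - v ⬝ᵥ (convolutionMatrix ν *ᵥ v)) := by
  have hinner : v ⬝ᵥ (convolutionMatrix ν *ᵥ v) = ∑ s, ν s * ∑ g, v g * v (s⁻¹ * g) := by
    simp only [dotProduct, convolutionMatrix_mulVec, mul_sum]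
    rw [sum_comm]
    exact sum_congr rfl fun _ _ => sum_congr rfl fun _ _ => by ring
  have hsplit : ∀ s, ν s * shiftEnergy v s
      = ν s * (2 * ∑ g, v g ^ 2) - 2 * (ν s * ∑ g, v g * v (s⁻¹ * g)) := fun s => by
    rw [shiftEnergy_eq]; ring
  rw [hinner, sum_congr rfl fun s _ => hsplit s, sum_sub_distrib, ← sum_mul, hν, ← mul_sum]
  ring

lemma mul_sum_sq_le_sum_mul_shiftEnergy {ν : G → ℝ} (hν : ∀ g, 0 ≤ ν g) {S : Finset G} {d : ℕ}
    (hgen : ∀ g : G, ∃ l : List G, l.length ≤ d ∧ (∀ x ∈ l, x ∈ S) ∧ l.prod = g)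
    {η : ℝ} (hη : 0 < η) (hηS : ∀ s ∈ S, η ≤ ν s) {v : G → ℝ} (hv : ∑ g, v g = 0) :
    2 * η * ∑ g, v g ^ 2 ≤ d ^ 2 * ∑ s, ν s * shiftEnergy v s := by
  set D := ∑ s, ν s * shiftEnergy v s
  have hD : 0 ≤ D := sum_nonneg fun s _ => mul_nonneg (hν s) (shiftEnergy_nonneg v s)
  have hS : ∀ s ∈ S, shiftEnergy v s ≤ D / η := fun s hs => by
    rw [le_div_iff₀ hη, mul_comm]
    calc η * shiftEnergy v s ≤ ν s * shiftEnergy v s :=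
          mul_le_mul_of_nonneg_right (hηS s hs) (shiftEnergy_nonneg v s)
      _ ≤ D := single_le_sum (f := fun s => ν s * shiftEnergy v s)
          (fun t _ => mul_nonneg (hν t) (shiftEnergy_nonneg v t)) (mem_univ s)
  have hG : ∀ x, shiftEnergy v x ≤ d ^ 2 * (D / η) := fun x => by
    obtain ⟨l, hlen, hl, rfl⟩ := hgen x
    exact shiftEnergy_list_prod_le v (div_nonneg hD hη.le) l hlen fun s hs => hS s (hl s hs)
  have hsum : Fintype.card G * (2 * ∑ g, v g ^ 2) ≤ Fintype.card G * (d ^ 2 * (D / η)) := by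
    rw [← mul_assoc, mul_comm _ (2 : ℝ), ← sum_shiftEnergy hv]
    simpa using sum_le_sum fun x (_ : x ∈ univ) => hG x
  have hcard : (0 : ℝ) < Fintype.card G := by exact_mod_cast Fintype.card_pos
  rw [mul_le_mul_iff_right₀ hcard, mul_div_assoc', le_div_iff₀ hη] at hsum
  linarith

end ConvolutionGap

open ConvolutionGap

theorem stmt5_general {G : Type*} [Fintype G] [Group G]
    (ν : G → ℝ) (hpos : ∀ g, 0 ≤ ν g) (hsum : ∑ g, ν g = 1)
    (S : Finset G)
    (d : ℕ) (hd : 0 < d)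
    (hgen : ∀ g : G, ∃ l : List G, l.length ≤ d ∧ (∀ x ∈ l, x ∈ S) ∧ l.prod = g)
    (η : ℝ) (hη : 0 < η) (hηS : ∀ s ∈ S, η ≤ ν s)
    (T : Matrix G G ℝ) (hT : T = fun g g' => ν (g * g'⁻¹))
    (lam : ℝ) (v : G → ℝ) (hv : v ≠ 0) (horth : ∑ g, v g = 0)
    (heig : T.mulVec v = lam • v) :
    lam ≤ 1 - η / (d : ℝ) ^ 2 := by
  set N := ∑ g, v g ^ 2
  have hN : 0 < N := by
    obtain ⟨g, hg⟩ := Function.ne_iff.mp hv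
    exact sum_pos' (fun _ _ => sq_nonneg _) ⟨g, mem_univ g, sq_pos_of_ne_zero hg⟩
  have hdirichlet : ∑ s, ν s * shiftEnergy v s = 2 * (1 - lam) * N := by
    rw [sum_mul_shiftEnergy hsum, ← show T = convolutionMatrix ν from hT, heig,
      dotProduct_smul, smul_eq_mul, dotProduct]
    simp only [N, sq]
    ring
  have hcompare := mul_sum_sq_le_sum_mul_shiftEnergy hpos hgen hη hηS horth
  rw [hdirichlet] at hcompare
  have hgap : η * (2 * N) ≤ (1 - lam) * d ^ 2 * (2 * N) := by linarith
  rw [le_sub_iff_add_le, ← le_sub_iff_add_le', div_le_iff₀ (by positivity)]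
  exact le_of_mul_le_mul_right hgap (mul_pos two_pos hN)

/-- Diaconis–Saloff-Coste comparison bound: if `ν` is a symmetric probability measure on a
finite group `G`, supported on a generating set `S` such that every group element is a product
of at most `d` elements of `S`, and every element of `S` has probability at least `η`, then
every eigenvalue `λ` of the averaging operator `T_ν` on the orthogonal complement of the
constants satisfies `λ ≤ 1 − η/d²`. -/
theorem stmt5 {G : Type*} [Fintype G] [Group G] [DecidableEq G]
    (ν : G → ℝ) (hpos : ∀ g, 0 ≤ ν g) (hsum : ∑ g, ν g = 1)
    (hsym : ∀ g, ν g⁻¹ = ν g)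
    (S : Finset G) (hsupp : ∀ g, ν g ≠ 0 → g ∈ S)
    (d : ℕ) (hd : 0 < d)
    (hgen : ∀ g : G, ∃ l : List G, l.length ≤ d ∧ (∀ x ∈ l, x ∈ S) ∧ l.prod = g)
    (η : ℝ) (hη : 0 < η) (hηS : ∀ s ∈ S, η ≤ ν s)
    (T : Matrix G G ℝ) (hT : T = fun g g' => ν (g * g'⁻¹))
    (lam : ℝ) (v : G → ℝ) (hv : v ≠ 0) (horth : ∑ g, v g = 0)
    (heig : T.mulVec v = lam • v) :
    lam ≤ 1 - η / (d : ℝ) ^ 2 :=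
  stmt5_general ν hpos hsum S d hd hgen η hη hηS T hT lam v hv horth heig
end
end

section
/- Let Q₁, …, Q_m be orthogonal projections where each Qᵢ commutes with all but at most g of the others, and H = Σᵢ Qᵢ frustration-free with gap Δ(H). Then for any unit vector ψ orthogonal to the ground space, ‖∏ᵢ(𝟙 − Qᵢ) ψ‖ ≤ (Δ(H)/g² + 1)^{−1/2}. -/
/-!
Put `φ = (1 - A₀) ⋯ (1 - A_{m-1}) x` and `χₖ = (1 - Aₖ) ⋯ (1 - A_{m-1}) x`, so that `χ₀ = φ`,
`χ_m = x` and `Aᵢ χᵢ = 0`. Moving `Aᵢ` from `χᵢ` down to `χ₀` through the factors `k < i`, a factor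
commuting with `Aᵢ` costs nothing, and any other costs at most `‖Aₖ χₖ₊₁‖`, whose square is
`‖χₖ₊₁‖² - ‖χₖ‖²`. Cauchy–Schwarz over the at most `g` non-commuting `k`, double counting and
telescoping give `⟪φ, H φ⟫ = ∑ᵢ ‖Aᵢ φ‖² ≤ g² (‖x‖² - ‖φ‖²)`. On the other hand every `1 - Aᵢ` is
self-adjoint and fixes `ker H`, so `φ` stays orthogonal to `ker H` and `⟪φ, H φ⟫ ≥ Δ ‖φ‖²` by the
spectral theorem. Hence `‖φ‖² ≤ g² / (Δ + g²)`.
-/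

open Matrix
noncomputable section

def vnorm {N : ℕ} (v : Fin N → ℂ) : ℝ := Real.sqrt (∑ i, ‖v i‖ ^ 2)

open Finset ContinuousLinearMap RCLike
open scoped InnerProductSpace

variable {𝕜 E : Type*} [RCLike 𝕜] [NormedAddCommGroup E] [InnerProductSpace 𝕜 E] [CompleteSpace E]

namespace IsStarProjection

variable {P a : E →L[𝕜] E}

theorem apply_apply (hP : IsStarProjection P) (x : E) : P (P x) = P x :=
  congr($(hP.isIdempotentElem.eq) x)

theorem inner_apply_self (hP : IsStarProjection P) (x : E) : ⟪x, P x⟫_𝕜 = ‖P x‖ ^ 2 := by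
  calc ⟪x, P x⟫_𝕜 = ⟪x, P (P x)⟫_𝕜 := by rw [hP.apply_apply]
    _ = ⟪P x, P x⟫_𝕜 := (hP.isSelfAdjoint.isSymmetric x (P x)).symm
    _ = ‖P x‖ ^ 2 := inner_self_eq_norm_sq_to_K _

theorem re_inner_apply_self (hP : IsStarProjection P) (x : E) : re ⟪x, P x⟫_𝕜 = ‖P x‖ ^ 2 := by
  rw [hP.inner_apply_self, ← ofReal_pow, ofReal_re]

theorem norm_sq_add_norm_sq_one_sub (hP : IsStarProjection P) (x : E) :
    ‖P x‖ ^ 2 + ‖(1 - P) x‖ ^ 2 = ‖x‖ ^ 2 := by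
  obtain ⟨K, _, rfl⟩ := isStarProjection_iff_eq_starProjection.mp hP
  rw [← K.starProjection_orthogonal', ← K.norm_sq_eq_add_norm_sq_starProjection]

theorem norm_apply_le (hP : IsStarProjection P) (x : E) : ‖P x‖ ≤ ‖x‖ := by
  obtain ⟨K, _, rfl⟩ := isStarProjection_iff_eq_starProjection.mp hP
  exact K.norm_starProjection_apply_le x

theorem norm_apply_one_sub_le_of_commute (ha : IsStarProjection a) (h : Commute P a) (y : E) :
    ‖P ((1 - a) y)‖ ≤ ‖P y‖ := by
  have hswap := congr($(((Commute.one_right P).sub_right h).eq) y)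
  exact (congrArg norm hswap).trans_le (ha.one_sub.norm_apply_le (P y))

theorem norm_apply_one_sub_le (hP : IsStarProjection P) (y : E) :
    ‖P ((1 - a) y)‖ ≤ ‖P y‖ + ‖a y‖ :=
  calc ‖P ((1 - a) y)‖ = ‖P y - P (a y)‖ := by simp
    _ ≤ ‖P y‖ + ‖P (a y)‖ := norm_sub_le _ _
    _ ≤ ‖P y‖ + ‖a y‖ := by gcongr; exact hP.norm_apply_le _

end IsStarProjection

theorem sum_sum_filter_le_mul_sum {ι : Type*} (s : Finset ι) (r : ι → ι → Prop) [DecidableRel r]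
    {w : ι → ℝ} (hw : ∀ k ∈ s, 0 ≤ w k) {g : ℕ} (hr : ∀ k ∈ s, #(s.filter (r · k)) ≤ g) :
    ∑ i ∈ s, ∑ k ∈ s.filter (r i), w k ≤ g * ∑ k ∈ s, w k :=
  calc ∑ i ∈ s, ∑ k ∈ s.filter (r i), w k = ∑ k ∈ s, #(s.filter (r · k)) * w k := by
        simp only [sum_filter]
        rw [sum_comm]
        simp only [← sum_filter, sum_const, nsmul_eq_mul]
    _ ≤ ∑ k ∈ s, g * w k :=
        sum_le_sum fun k hk => mul_le_mul_of_nonneg_right (by exact_mod_cast hr k hk) (hw k hk)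
    _ = g * ∑ k ∈ s, w k := (mul_sum ..).symm

section Telescoping

variable {A : ℕ → E →L[𝕜] E} {χ : ℕ → E} {n : ℕ}

theorem sum_range_norm_sq_apply_succ (hA : ∀ k, IsStarProjection (A k))
    (hχ : ∀ k < n, χ k = (1 - A k) (χ (k + 1))) :
    ∑ k ∈ range n, ‖A k (χ (k + 1))‖ ^ 2 = ‖χ n‖ ^ 2 - ‖χ 0‖ ^ 2 := by
  rw [← sum_range_sub (fun k => ‖χ k‖ ^ 2)]
  refine sum_congr rfl fun k hk => ?_
  rw [hχ k (mem_range.mp hk)]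
  linarith [(hA k).norm_sq_add_norm_sq_one_sub (χ (k + 1))]

open Classical in
theorem norm_apply_le_add_sum_noncommuting (hA : ∀ k, IsStarProjection (A k))
    (hχ : ∀ k < n, χ k = (1 - A k) (χ (k + 1))) {P : E →L[𝕜] E} (hP : IsStarProjection P)
    {t : ℕ} (ht : t ≤ n) :
    ‖P (χ 0)‖ ≤
      ‖P (χ t)‖ + ∑ k ∈ (range t).filter (fun k => ¬Commute P (A k)), ‖A k (χ (k + 1))‖ := by
  induction t with
  | zero => simp
  | succ t ih =>
    refine (ih (by omega)).trans ?_
    simp only [sum_filter, sum_range_succ]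
    rw [hχ t (by omega)]
    by_cases h : Commute P (A t)
    · simp only [h, not_true_eq_false, if_false, add_zero]
      linarith [(hA t).norm_apply_one_sub_le_of_commute h (χ (t + 1))]
    · simp only [h, not_false_eq_true, if_true]
      linarith [hP.norm_apply_one_sub_le (a := A t) (χ (t + 1))]

open Classical in
theorem norm_apply_le_sum_noncommuting (hA : ∀ k, IsStarProjection (A k))
    (hχ : ∀ k < n, χ k = (1 - A k) (χ (k + 1))) {i : ℕ} (hi : i < n) :
    ‖A i (χ 0)‖ ≤ ∑ k ∈ (range i).filter (fun k => ¬Commute (A i) (A k)), ‖A k (χ (k + 1))‖ := by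
  have hkill : A i (χ i) = 0 := by
    rw [hχ i hi, ← mul_apply_eq_comp, (hA i).mul_one_sub_self, _root_.zero_apply]
  simpa [hkill] using norm_apply_le_add_sum_noncommuting hA hχ (hA i) hi.le

open Classical in
theorem sum_range_norm_sq_apply_le (hA : ∀ k, IsStarProjection (A k))
    (hχ : ∀ k < n, χ k = (1 - A k) (χ (k + 1))) {g : ℕ}
    (hcomm : ∀ i < n, #((range n).filter (fun j => ¬Commute (A i) (A j))) ≤ g) :
    ∑ i ∈ range n, ‖A i (χ 0)‖ ^ 2 ≤ g ^ 2 * (‖χ n‖ ^ 2 - ‖χ 0‖ ^ 2) := by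
  set d : ℕ → ℝ := fun k => ‖A k (χ (k + 1))‖
  have hrow : ∀ i ∈ range n, ‖A i (χ 0)‖ ^ 2 ≤
      g * ∑ k ∈ (range n).filter (fun k => ¬Commute (A i) (A k)), d k ^ 2 := by
    intro i hi
    have hi := mem_range.mp hi
    set B := (range i).filter (fun k => ¬Commute (A i) (A k))
    have hB : B ⊆ (range n).filter (fun k => ¬Commute (A i) (A k)) :=
      filter_subset_filter _ (range_subset_range.mpr hi.le)
    have hBcard : (#B : ℝ) ≤ g := by exact_mod_cast (card_le_card hB).trans (hcomm i hi)
    calc ‖A i (χ 0)‖ ^ 2 ≤ (∑ k ∈ B, d k) ^ 2 := by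
          gcongr; exact norm_apply_le_sum_noncommuting hA hχ hi
      _ ≤ #B * ∑ k ∈ B, d k ^ 2 := sq_sum_le_card_mul_sum_sq
      _ ≤ g * ∑ k ∈ (range n).filter (fun k => ¬Commute (A i) (A k)), d k ^ 2 := by
          gcongr
  have hcol : ∀ k ∈ range n, #((range n).filter (fun i => ¬Commute (A i) (A k))) ≤ g := by
    intro k hk
    simpa only [Commute.symm_iff] using hcomm k (mem_range.mp hk)
  calc ∑ i ∈ range n, ‖A i (χ 0)‖ ^ 2
      ≤ ∑ i ∈ range n, g * ∑ k ∈ (range n).filter (fun k => ¬Commute (A i) (A k)), d k ^ 2 :=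
        sum_le_sum hrow
    _ = g * ∑ i ∈ range n, ∑ k ∈ (range n).filter (fun k => ¬Commute (A i) (A k)), d k ^ 2 :=
        (mul_sum ..).symm
    _ ≤ g * (g * ∑ k ∈ range n, d k ^ 2) := by
        gcongr
        exact sum_sum_filter_le_mul_sum (range n) (fun i k => ¬Commute (A i) (A k))
          (fun _ _ => sq_nonneg _) hcol
    _ = g ^ 2 * (‖χ n‖ ^ 2 - ‖χ 0‖ ^ 2) := by
        rw [sum_range_norm_sq_apply_succ hA hχ]; ring

end Telescoping

theorem List.prod_map_drop_finRange {M : Type*} [Monoid M] {m k : ℕ} (f : Fin m → M)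
    (hk : k < m) :
    (((List.finRange m).drop k).map f).prod =
      f ⟨k, hk⟩ * (((List.finRange m).drop (k + 1)).map f).prod := by
  rw [List.drop_eq_getElem_cons (by simpa using hk), List.getElem_finRange, List.map_cons,
    List.prod_cons]
  rfl

open Classical in
theorem sum_norm_sq_apply_prod_one_sub_le {m g : ℕ} {A : Fin m → E →L[𝕜] E}
    (hA : ∀ i, IsStarProjection (A i))
    (hcomm : ∀ i, #(univ.filter fun j => ¬Commute (A i) (A j)) ≤ g) (x : E) :
    ∑ i, ‖A i (((List.finRange m).map fun i => 1 - A i).prod x)‖ ^ 2 ≤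
      g ^ 2 * (‖x‖ ^ 2 - ‖((List.finRange m).map fun i => 1 - A i).prod x‖ ^ 2) := by
  set A' : ℕ → E →L[𝕜] E := Function.extend Fin.val A 0
  have hA'_val : ∀ i : Fin m, A' i = A i := Fin.val_injective.extend_apply A 0
  have hA' : ∀ k, IsStarProjection (A' k) := by
    intro k
    by_cases hk : k < m
    · exact hA'_val ⟨k, hk⟩ ▸ hA _
    · have hzero : A' k = 0 :=
        Function.extend_apply' (f := (Fin.val : Fin m → ℕ)) A 0 k (by rintro ⟨i, rfl⟩; omega)
      exact hzero ▸ .zero _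
  set χ : ℕ → E := fun k => (((List.finRange m).drop k).map fun i => 1 - A i).prod x
  have hχ : ∀ k < m, χ k = (1 - A' k) (χ (k + 1)) := by
    intro k hk
    simp only [χ, List.prod_map_drop_finRange _ hk, mul_apply_eq_comp, ← hA'_val]
  have hcomm' : ∀ i < m, #((range m).filter fun j => ¬Commute (A' i) (A' j)) ≤ g := by
    intro i hi
    rw [card_filter, ← Fin.sum_univ_eq_sum_range (fun j => if ¬Commute (A' i) (A' j) then 1 else 0),
      ← card_filter]
    simpa only [← hA'_val] using hcomm ⟨i, hi⟩
  have key := sum_range_norm_sq_apply_le hA' hχ hcomm'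
  rw [← Fin.sum_univ_eq_sum_range (fun i => ‖A' i (χ 0)‖ ^ 2)] at key
  have hχm : χ m = x := by simp [χ, List.drop_of_length_le]
  rw [hχm] at key
  simpa [χ, hA'_val] using key

section Kernel

variable {ι : Type*} [Fintype ι] {A : ι → E →L[𝕜] E}

theorem re_inner_sum_apply_self (hA : ∀ i, IsStarProjection (A i)) (x : E) :
    re ⟪x, (∑ i, A i) x⟫_𝕜 = ∑ i, ‖A i x‖ ^ 2 := by
  simp only [_root_.sum_apply, inner_sum, map_sum, (hA _).re_inner_apply_self]

theorem apply_eq_zero_of_mem_ker_sum (hA : ∀ i, IsStarProjection (A i)) {v : E}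
    (hv : v ∈ LinearMap.ker ((∑ i, A i : E →L[𝕜] E) : E →ₗ[𝕜] E)) (i : ι) : A i v = 0 := by
  have hsum : ∑ j, ‖A j v‖ ^ 2 = 0 := by
    rw [← re_inner_sum_apply_self hA, show (∑ j, A j) v = 0 from hv, inner_zero_right, map_zero]
  have := (sum_eq_zero_iff_of_nonneg fun j _ => sq_nonneg ‖A j v‖).mp hsum i (mem_univ i)
  simpa using this

theorem apply_mem_orthogonal_of_isSelfAdjoint {T : E →L[𝕜] E} (hT : IsSelfAdjoint T)
    {K : Submodule 𝕜 E} (hK : ∀ v ∈ K, T v ∈ K) {y : E} (hy : y ∈ Kᗮ) : T y ∈ Kᗮ := by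
  intro v hv
  rw [← coe_coe, ← hT.isSymmetric]
  exact hy _ (hK v hv)

theorem list_prod_map_one_sub_apply_mem_orthogonal_ker (hA : ∀ i, IsStarProjection (A i))
    (L : List ι) {x : E} (hx : x ∈ (LinearMap.ker ((∑ i, A i : E →L[𝕜] E) : E →ₗ[𝕜] E))ᗮ) :
    (L.map fun i => 1 - A i).prod x ∈ (LinearMap.ker ((∑ i, A i : E →L[𝕜] E) : E →ₗ[𝕜] E))ᗮ := by
  induction L with
  | nil => simpa using hx
  | cons a L ih =>
    rw [List.map_cons, List.prod_cons, mul_apply_eq_comp]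
    refine apply_mem_orthogonal_of_isSelfAdjoint (hA a).one_sub.isSelfAdjoint (fun v hv => ?_) ih
    simpa [apply_eq_zero_of_mem_ker_sum hA hv a] using hv

end Kernel

theorem le_one_div_div_add_one {x Δ G : ℝ} (hΔ : 0 < Δ) (hG : 0 ≤ G)
    (h : Δ * x ≤ G * (1 - x)) : x ≤ 1 / (Δ / G + 1) := by
  rcases hG.eq_or_lt with rfl | hG
  · simp only [div_zero, zero_add, div_one]
    nlinarith
  · rw [div_add_one hG.ne', one_div_div, le_div_iff₀ (by positivity)]
    linarith

theorem mul_norm_sq_le_re_inner_of_mem_orthogonal_ker [FiniteDimensional 𝕜 E] {T : E →L[𝕜] E}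
    (hT : IsSelfAdjoint T) {Δ : ℝ} (hgap : ∀ μ : ℝ, (μ : 𝕜) ∈ spectrum 𝕜 T → μ ≠ 0 → Δ ≤ μ)
    {x : E} (hx : x ∈ (LinearMap.ker (T : E →ₗ[𝕜] E))ᗮ) :
    Δ * ‖x‖ ^ 2 ≤ re ⟪x, T x⟫_𝕜 := by
  have hT' := hT.isSymmetric
  set b := hT'.eigenvectorBasis rfl
  set μ := hT'.eigenvalues rfl
  have hterm : ∀ i, re (⟪x, b i⟫_𝕜 * ⟪b i, T x⟫_𝕜) = μ i * ‖⟪b i, x⟫_𝕜‖ ^ 2 := by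
    intro i
    rw [← coe_coe, ← hT', hT'.apply_eigenvectorBasis, inner_smul_left, conj_ofReal,
      mul_left_comm, ← inner_conj_symm x, RCLike.conj_mul, ← ofReal_pow, ← ofReal_mul, ofReal_re]
  have hle : ∀ i, Δ * ‖⟪b i, x⟫_𝕜‖ ^ 2 ≤ μ i * ‖⟪b i, x⟫_𝕜‖ ^ 2 := by
    intro i
    by_cases hμ : μ i = 0
    · have hker : b i ∈ LinearMap.ker (T : E →ₗ[𝕜] E) := by
        rw [LinearMap.mem_ker, hT'.apply_eigenvectorBasis]
        change (μ i : 𝕜) • b i = 0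
        rw [hμ, ofReal_zero, zero_smul]
      simp [Submodule.inner_right_of_mem_orthogonal hker hx]
    · have hspec : (μ i : 𝕜) ∈ spectrum 𝕜 T := by
        rw [ContinuousLinearMap.spectrum_eq]
        exact (hT'.hasEigenvalue_eigenvalues rfl i).mem_spectrum
      exact mul_le_mul_of_nonneg_right (hgap _ hspec hμ) (sq_nonneg _)
  calc Δ * ‖x‖ ^ 2 = ∑ i, Δ * ‖⟪b i, x⟫_𝕜‖ ^ 2 := by rw [← mul_sum, b.sum_sq_norm_inner_right]
    _ ≤ ∑ i, μ i * ‖⟪b i, x⟫_𝕜‖ ^ 2 := sum_le_sum fun i _ => hle i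
    _ = re ⟪x, T x⟫_𝕜 := by simp_rw [← hterm, ← map_sum, b.sum_inner_mul_inner]

open Classical in
theorem norm_prod_one_sub_apply_le [FiniteDimensional 𝕜 E] {m : ℕ} {A : Fin m → E →L[𝕜] E}
    (hA : ∀ i, IsStarProjection (A i)) {g : ℕ}
    (hcomm : ∀ i, #(univ.filter fun j => ¬Commute (A i) (A j)) ≤ g) {Δ : ℝ} (hΔ : 0 < Δ)
    (hgap : ∀ μ : ℝ, (μ : 𝕜) ∈ spectrum 𝕜 (∑ i, A i) → μ ≠ 0 → Δ ≤ μ) {x : E} (hx : ‖x‖ = 1)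
    (hxker : x ∈ (LinearMap.ker ((∑ i, A i : E →L[𝕜] E) : E →ₗ[𝕜] E))ᗮ) :
    ‖((List.finRange m).map fun i => 1 - A i).prod x‖ ≤ √(1 / (Δ / g ^ 2 + 1)) := by
  set φ := ((List.finRange m).map fun i => 1 - A i).prod x
  have hlow := mul_norm_sq_le_re_inner_of_mem_orthogonal_ker
    (isSelfAdjoint_sum univ fun i _ => (hA i).isSelfAdjoint) hgap
    (list_prod_map_one_sub_apply_mem_orthogonal_ker hA (List.finRange m) hxker)
  have hup := sum_norm_sq_apply_prod_one_sub_le hA hcomm x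
  rw [re_inner_sum_apply_self hA] at hlow
  rw [hx, one_pow] at hup
  rw [← Real.sqrt_sq (norm_nonneg φ)]
  exact Real.sqrt_le_sqrt (le_one_div_div_add_one hΔ (by positivity) (hlow.trans hup))

theorem vnorm_eq_norm_toLp {N : ℕ} (v : Fin N → ℂ) : vnorm v = ‖WithLp.toLp 2 v‖ := by
  rw [vnorm, EuclideanSpace.norm_eq]

theorem toLp_mem_orthogonal_ker_toEuclideanCLM {N : ℕ} {H : Matrix (Fin N) (Fin N) ℂ}
    {ψ : Fin N → ℂ} (horth : ∀ φ : Fin N → ℂ, H *ᵥ φ = 0 → star φ ⬝ᵥ ψ = 0) :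
    WithLp.toLp 2 ψ ∈
      (LinearMap.ker ((toEuclideanCLM (𝕜 := ℂ) H : EuclideanSpace ℂ (Fin N) →L[ℂ] _) :
        EuclideanSpace ℂ (Fin N) →ₗ[ℂ] EuclideanSpace ℂ (Fin N)))ᗮ := by
  intro v hv
  have hHv : H *ᵥ WithLp.ofLp v = 0 := by
    rw [← ofLp_toEuclideanCLM]
    exact congrArg WithLp.ofLp hv
  rw [EuclideanSpace.inner_eq_star_dotProduct, dotProduct_comm]
  exact horth _ hHv

theorem stmt7_general {N m : ℕ} (Q : Fin m → Matrix (Fin N) (Fin N) ℂ)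
    (hherm : ∀ i, (Q i).IsHermitian) (hproj : ∀ i, Q i * Q i = Q i)
    (g : ℕ)
    (hcomm : ∀ i, (Finset.univ.filter (fun j => Q i * Q j ≠ Q j * Q i)).card ≤ g)
    (H : Matrix (Fin N) (Fin N) ℂ) (hH : H = ∑ i, Q i)
    (Δ : ℝ) (hΔpos : 0 < Δ)
    (hΔmin : ∀ μ : ℝ, (μ : ℂ) ∈ spectrum ℂ H → μ ≠ 0 → Δ ≤ μ)
    (ψ : Fin N → ℂ) (hψ : vnorm ψ = 1)
    (horth : ∀ φ : Fin N → ℂ, H.mulVec φ = 0 → star φ ⬝ᵥ ψ = 0) :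
    vnorm ((((List.finRange m).map (fun i => (1 : Matrix (Fin N) (Fin N) ℂ) - Q i)).prod).mulVec ψ)
      ≤ Real.sqrt (1 / (Δ / (g : ℝ) ^ 2 + 1)) := by
  classical
  set e := toEuclideanCLM (n := Fin N) (𝕜 := ℂ)
  have hsum : ∑ i, e (Q i) = e H := by rw [hH, map_sum]
  have hA : ∀ i, IsStarProjection (e (Q i)) := fun i => IsStarProjection.map ⟨hproj i, hherm i⟩ e
  have hcomm' : ∀ i, #(univ.filter fun j => ¬Commute (e (Q i)) (e (Q j))) ≤ g := by
    intro i
    convert hcomm i using 3 with j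
    simp [Commute, SemiconjBy, ← map_mul]
  have hgap : ∀ μ : ℝ, (μ : ℂ) ∈ spectrum ℂ (∑ i, e (Q i)) → μ ≠ 0 → Δ ≤ μ := by
    rw [hsum, AlgEquiv.spectrum_eq]
    exact hΔmin
  have key := norm_prod_one_sub_apply_le hA hcomm' hΔpos hgap
    (by rwa [← vnorm_eq_norm_toLp]) (hsum ▸ toLp_mem_orthogonal_ker_toEuclideanCLM horth)
  rw [vnorm_eq_norm_toLp, ← toEuclideanCLM_toLp, map_list_prod, List.map_map]
  simpa [Function.comp_def] using key

/-- Detectability lemma (Anshu–Arad–Vidick): for orthogonal projections `Q₁,…,Q_m`,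
each commuting with all but at most `g` of the others, with `H = Σᵢ Qᵢ` frustration free
with spectral gap `Δ` (smallest nonzero eigenvalue), and any unit vector `ψ` orthogonal to
the ground space `ker H`, `‖∏ᵢ (𝟙 − Qᵢ) ψ‖ ≤ (Δ/g² + 1)^{−1/2}`. -/
theorem stmt7 {N m : ℕ} (Q : Fin m → Matrix (Fin N) (Fin N) ℂ)
    (hherm : ∀ i, (Q i).IsHermitian) (hproj : ∀ i, Q i * Q i = Q i)
    (g : ℕ) (hg : 0 < g)
    (hcomm : ∀ i, (Finset.univ.filter (fun j => Q i * Q j ≠ Q j * Q i)).card ≤ g)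
    (H : Matrix (Fin N) (Fin N) ℂ) (hH : H = ∑ i, Q i)
    (Δ : ℝ) (hΔmem : (Δ : ℂ) ∈ spectrum ℂ H) (hΔpos : 0 < Δ)
    (hΔmin : ∀ μ : ℝ, (μ : ℂ) ∈ spectrum ℂ H → μ ≠ 0 → Δ ≤ μ)
    (ψ : Fin N → ℂ) (hψ : vnorm ψ = 1)
    (horth : ∀ φ : Fin N → ℂ, H.mulVec φ = 0 → star φ ⬝ᵥ ψ = 0) :
    vnorm ((((List.finRange m).map (fun i => (1 : Matrix (Fin N) (Fin N) ℂ) - Q i)).prod).mulVec ψ)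
      ≤ Real.sqrt (1 / (Δ / (g : ℝ) ^ 2 + 1)) :=
  stmt7_general Q hherm hproj g hcomm H hH Δ hΔpos hΔmin ψ hψ horth
end
end

section
/- For every real x > 0, the branch W₋₁ of the Lambert W function satisfies W₋₁(−e^{−x−1}) ≥ −1 − √(2x) − x. -/
/-!
The map `t ↦ t eᵗ` is strictly decreasing on `(-∞, -1]`, so it suffices to check that
`b = -1 - s - s²/2` with `s = √(2x)` satisfies `b e^b ≥ -e^{-x-1}`. Since `x = s²/2`, this reads
`(1 + s + s²/2) e^{-s} ≤ 1`, which is the second-order Taylor bound `1 + s + s²/2 ≤ eˢ`.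
-/

open Real Set

theorem strictAntiOn_mul_exp_Iic : StrictAntiOn (fun t : ℝ => t * exp t) (Iic (-1)) := by
  refine strictAntiOn_of_deriv_neg (convex_Iic _) (by fun_prop) fun t ht => ?_
  rw [interior_Iic] at ht
  have hderiv : HasDerivAt (fun t : ℝ => t * exp t) (1 * exp t + t * exp t) t :=
    (hasDerivAt_id t).mul (hasDerivAt_exp t)
  rw [hderiv.deriv, ← add_mul]
  exact mul_neg_of_neg_of_pos (by linarith [mem_Iio.1 ht]) (exp_pos t)

theorem quadratic_mul_exp_neg_le_one {s : ℝ} (hs : 0 ≤ s) : (1 + s + s ^ 2 / 2) * exp (-s) ≤ 1 :=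
  calc (1 + s + s ^ 2 / 2) * exp (-s) ≤ exp s * exp (-s) :=
        mul_le_mul_of_nonneg_right (quadratic_le_exp_of_nonneg hs) (exp_pos _).le
    _ = 1 := by rw [← exp_add, add_neg_cancel, exp_zero]

theorem neg_exp_le_mul_exp_of_nonneg {s : ℝ} (hs : 0 ≤ s) :
    -exp (-(s ^ 2 / 2) - 1) ≤ (-1 - s - s ^ 2 / 2) * exp (-1 - s - s ^ 2 / 2) := by
  have hsplit : exp (-1 - s - s ^ 2 / 2) = exp (-(s ^ 2 / 2) - 1) * exp (-s) := by
    rw [← exp_add]; ring_nf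
  rw [hsplit]
  nlinarith [quadratic_mul_exp_neg_le_one hs, exp_pos (-(s ^ 2 / 2) - 1)]

/-- Chatzigeorgiou's bound on the branch `W₋₁` of the Lambert W function:
for every `x > 0`, the unique `y ≤ −1` with `y·e^y = −e^{−x−1}` (that is,
`y = W₋₁(−e^{−x−1})`) satisfies `y ≥ −1 − √(2x) − x`. -/
theorem stmt15 (x : ℝ) (hx : 0 < x) (y : ℝ) (hy : y ≤ -1)
    (hW : y * Real.exp y = -Real.exp (-x - 1)) :
    -1 - Real.sqrt (2 * x) - x ≤ y := by
  set s := √(2 * x)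
  have hs : 0 ≤ s := sqrt_nonneg _
  have hx_eq : x = s ^ 2 / 2 := by rw [sq_sqrt (by linarith)]; ring
  have hb : -1 - s - s ^ 2 / 2 ≤ -1 := by nlinarith
  rw [hx_eq] at hW ⊢
  refine (strictAntiOn_mul_exp_Iic.le_iff_ge hy hb).1 ?_
  simpa only [hW] using neg_exp_le_mul_exp_of_nonneg hs
end

section
/- For every integer t ≥ 1, the choice l = ⌈2·log₂(4t) + 1.5·√(log₂(4t))⌉ satisfies the inequality (6t²)/2^l ≤ (1/2)·l^{−1/2}. -/
/-- Improved block-size condition: for every integer `t ≥ 1`, the choice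
`l = ⌈2·log₂(4t) + 1.5·√(log₂(4t))⌉` satisfies `(6t²)/2^l ≤ (1/2)·l^{−1/2}`. -/
theorem stmt16 (t : ℕ) (ht : 1 ≤ t)
    (l : ℕ)
    (hl : l = ⌈2 * Real.logb 2 (4 * t) + 1.5 * Real.sqrt (Real.logb 2 (4 * t))⌉₊) :
    (6 * (t : ℝ) ^ 2) / 2 ^ l ≤ (1 / 2) * (l : ℝ) ^ (-(1 / 2) : ℝ) := by
  have ht1 : (1 : ℝ) ≤ (t : ℝ) := by exact_mod_cast ht
  set T : ℝ := 4 * (t : ℕ) with hT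
  have hT4 : (4 : ℝ) ≤ T := by simp only [hT]; nlinarith
  have hTpos : (0 : ℝ) < T := by linarith
  set L : ℝ := Real.logb 2 T with hLdef
  have hL2 : (2 : ℝ) ≤ L := by
    have h4 : Real.logb 2 4 = 2 := by
      rw [show (4:ℝ) = 2 ^ (2:ℝ) by norm_num,
        Real.logb_rpow (by norm_num) (by norm_num)]
    calc (2:ℝ) = Real.logb 2 4 := h4.symm
      _ ≤ L := Real.logb_le_logb_of_le (b := 2) one_lt_two (by norm_num) hT4
  have hLpos : (0 : ℝ) < L := by linarith
  set x : ℝ := Real.sqrt L with hxdef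
  have hx2 : x ^ 2 = L := Real.sq_sqrt hLpos.le
  have hx : (1.414 : ℝ) ≤ x := by
    rw [hxdef, show (1.414:ℝ) = Real.sqrt (1.414 ^ 2) by
      rw [Real.sqrt_sq]; norm_num]
    exact Real.sqrt_le_sqrt (by nlinarith)
  have hxpos : (0 : ℝ) < x := by linarith
  -- bounds on l
  have hlo : 2 * L + 1.5 * x ≤ (l : ℝ) := by rw [hl]; exact Nat.le_ceil _
  have hhi : (l : ℝ) ≤ 2 * L + 1.5 * x + 1 := by
    rw [hl]; exact (Nat.ceil_lt_add_one (by positivity)).le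
  have hhix : (l : ℝ) ≤ 2 * x ^ 2 + 1.5 * x + 1 := by rw [hx2]; exact hhi
  have hlpos : (0 : ℝ) < (l : ℝ) := by nlinarith
  -- the exponential lower bound: (16/9) * 2^(3x) ≥ l
  have hc : (0.6931 : ℝ) ≤ Real.log 2 := by
    have := Real.log_two_gt_d9; linarith
  have hexp : (l : ℝ) ≤ 16 / 9 * (2 : ℝ) ^ (3 * x) := by
    have h1 : (2 : ℝ) ^ (3 * x) = Real.exp (Real.log 2 * (3 * x)) :=
      Real.rpow_def_of_pos (by norm_num) _
    have h2 : Real.exp (Real.log 2 * (3 * x))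
        = Real.exp (Real.log 2 * (3 * x) / 4) ^ (4 : ℕ) := by
      rw [← Real.exp_nat_mul]; ring_nf
    have h3 : Real.log 2 * (3 * x) / 4 + 1 ≤ Real.exp (Real.log 2 * (3 * x) / 4) :=
      Real.add_one_le_exp _
    have h4 : (Real.log 2 * (3 * x) / 4 + 1) ^ (4:ℕ)
        ≤ Real.exp (Real.log 2 * (3 * x) / 4) ^ (4:ℕ) := by
      apply pow_le_pow_left₀ (by positivity) h3
    rw [h1, h2]
    set c : ℝ := Real.log 2 with hcdef
    have hc0 : (0:ℝ) ≤ c := by linarith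
    have p3 : (0:ℝ) ≤ c ^ 3 * x ^ 3 := by positivity
    have p4 : (0:ℝ) ≤ c ^ 4 * x ^ 4 := by positivity
    have hb' : 1.5 * x ≤ 16 / 3 * (c * x) := by
      nlinarith [mul_nonneg (sub_nonneg.2 hc) hxpos.le]
    have hc2' : 2 * x ^ 2 ≤ 6 * (c ^ 2 * x ^ 2) := by
      nlinarith [mul_nonneg (mul_nonneg (sub_nonneg.2 hc) (sub_nonneg.2 hc)) (sq_nonneg x),
        mul_nonneg (sub_nonneg.2 hc) (sq_nonneg x)]
    have hexpand : 16 / 9 * (c * (3 * x) / 4 + 1) ^ (4:ℕ)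
        = 16 / 9 + 16 / 3 * (c * x) + 6 * (c ^ 2 * x ^ 2)
          + 3 * (c ^ 3 * x ^ 3) + 9 / 16 * (c ^ 4 * x ^ 4) := by
      ring
    have hpoly : 2 * x ^ 2 + 1.5 * x + 1 ≤ 16 / 9 * (c * (3 * x) / 4 + 1) ^ (4:ℕ) := by
      rw [hexpand]; linarith
    linarith [hpoly, h4, hhix]
  -- 2 ^ l ≥ 16 t² 2^(1.5 x)
  have hpow : 16 * (t : ℝ) ^ 2 * (2 : ℝ) ^ (1.5 * x) ≤ (2 : ℝ) ^ (l : ℕ) := by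
    have e1 : (2 : ℝ) ^ (l : ℕ) = (2 : ℝ) ^ ((l : ℕ) : ℝ) := by
      rw [Real.rpow_natCast]
    rw [e1]
    have e2 : (2 : ℝ) ^ (2 * L + 1.5 * x) ≤ (2 : ℝ) ^ ((l : ℕ) : ℝ) :=
      Real.rpow_le_rpow_of_exponent_le (by norm_num) hlo
    have e2L : (2:ℝ) ^ (2 * L) = ((2:ℝ) ^ L) ^ (2:ℕ) := by
      rw [← Real.rpow_natCast ((2:ℝ) ^ L) 2,
        ← Real.rpow_mul (by norm_num : (0:ℝ) ≤ 2)]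
      norm_num [mul_comm]
    have e3 : (2 : ℝ) ^ (2 * L + 1.5 * x)
        = ((2 : ℝ) ^ L) ^ (2:ℕ) * (2 : ℝ) ^ (1.5 * x) := by
      rw [Real.rpow_add (by norm_num), e2L]
    have e4 : (2 : ℝ) ^ L = T := Real.rpow_logb (by norm_num) (by norm_num) hTpos
    rw [e3, e4] at e2
    calc 16 * (t : ℝ) ^ 2 * (2 : ℝ) ^ (1.5 * x) = T ^ (2:ℕ) * (2:ℝ) ^ (1.5 * x) := by
          rw [hT]; push_cast; ring
      _ ≤ _ := e2
  -- √l ≤ (4/3) 2^(1.5x)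
  have hsqrt : Real.sqrt l ≤ 4 / 3 * (2 : ℝ) ^ (1.5 * x) := by
    have hsq : (4 / 3 * (2 : ℝ) ^ (1.5 * x)) ^ (2:ℕ) = 16 / 9 * (2:ℝ) ^ (3 * x) := by
      rw [mul_pow, ← Real.rpow_natCast ((2:ℝ) ^ (1.5 * x)) 2,
        ← Real.rpow_mul (by norm_num : (0:ℝ) ≤ 2)]
      norm_num
      congr 1
      ring
    calc Real.sqrt l ≤ Real.sqrt ((4 / 3 * (2 : ℝ) ^ (1.5 * x)) ^ (2:ℕ)) := by
          apply Real.sqrt_le_sqrt; rw [hsq]; exact hexp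
      _ = 4 / 3 * (2 : ℝ) ^ (1.5 * x) := Real.sqrt_sq (by positivity)
  -- finish
  have hkey : 12 * (t : ℝ) ^ 2 * Real.sqrt l ≤ (2:ℝ) ^ (l : ℕ) := by
    calc 12 * (t : ℝ) ^ 2 * Real.sqrt l
        ≤ 12 * (t : ℝ) ^ 2 * (4 / 3 * (2 : ℝ) ^ (1.5 * x)) := by
          apply mul_le_mul_of_nonneg_left hsqrt (by positivity)
      _ = 16 * (t : ℝ) ^ 2 * (2 : ℝ) ^ (1.5 * x) := by ring
      _ ≤ _ := hpow
  have hrw : ((l : ℝ)) ^ (-(1 / 2) : ℝ) = (Real.sqrt l)⁻¹ := by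
    rw [Real.rpow_neg hlpos.le, Real.sqrt_eq_rpow]
  rw [hrw, show ((1:ℝ)/2) * (Real.sqrt l)⁻¹ = 1 / (2 * Real.sqrt l) by
    ring]
  have hsl : (0:ℝ) < Real.sqrt l := Real.sqrt_pos.mpr hlpos
  rw [div_le_div_iff₀ (by positivity) (by positivity)]
  calc 6 * (t : ℝ) ^ 2 * (2 * Real.sqrt l) = 12 * (t : ℝ) ^ 2 * Real.sqrt l := by ring
    _ ≤ (2:ℝ) ^ (l:ℕ) := hkey
    _ = 1 * (2:ℝ) ^ (l:ℕ) := (one_mul _).symm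
end
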